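/- Let R' be an R-cross-section of IS_m ≀_p IS_n and set R'_1 = {a ∈ IS_n : (f,a) ∈ R' for some f}. Then R'_1 is an R-cross-section of IS_n; moreover, writing e' = (0̄, 1) for the element with identity second component and first component constantly the empty map, one has e'R' = {(0̄|_{dom(a)}, a) : a ∈ R'_1}, and for any semigroup isomorphism φ: R' → R'' of R-cross-sections of IS_m ≀_p IS_n, the map φ_1: R'_1 → R''_1 determined by (0̄|_{dom(φ_1(a))}, φ_1(a)) = φ((0̄|_{dom(a)}, a)) is a semigroup isomorphism. -/

import Mathlib

open scoped Classical

/-- `IS n` is the full inverse symmetric semigroup: all partial bijections of `Fin n`;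
multiplication is composition of partial maps (maps acting on the right). -/
abbrev IS (n : ℕ) : Type := PEquiv (Fin n) (Fin n)

noncomputable section
namespace ISW

instance {n : ℕ} : Mul (IS n) := ⟨PEquiv.trans⟩
instance {n : ℕ} : One (IS n) := ⟨PEquiv.refl _⟩

/-- The domain of a partial bijection. -/
def pdom {n : ℕ} (f : IS n) : Set (Fin n) := {x | (f x).isSome}

/-- The range of a partial bijection. -/
def pran {n : ℕ} (f : IS n) : Set (Fin n) := {y | (f.symm y).isSome}

/-- Green's R-relation on a semigroup (with identity): `u R v` iff `uS = vS`. -/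
def GreenR {S : Type*} [Mul S] (u v : S) : Prop :=
  {w | ∃ s, w = u * s} = {w | ∃ s, w = v * s}

/-- Green's L-relation on a semigroup (with identity): `u L v` iff `Su = Sv`. -/
def GreenL {S : Type*} [Mul S] (u v : S) : Prop :=
  {w | ∃ s, w = s * u} = {w | ∃ s, w = s * v}

/-- An R-cross-section: a subsemigroup containing exactly one element of every
Green R-class. -/
def IsRCrossSection {S : Type*} [Mul S] (T : Set S) : Prop :=
  (∀ a ∈ T, ∀ b ∈ T, a * b ∈ T) ∧ ∀ x : S, ∃! t, t ∈ T ∧ GreenR x t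

/-- An L-cross-section: a subsemigroup containing exactly one element of every
Green L-class. -/
def IsLCrossSection {S : Type*} [Mul S] (T : Set S) : Prop :=
  (∀ a ∈ T, ∀ b ∈ T, a * b ∈ T) ∧ ∀ x : S, ∃! t, t ∈ T ∧ GreenL x t

/-- `φ` realizes a semigroup isomorphism from `T₁` onto `T₂`. -/
def IsSemiIso {S₁ S₂ : Type*} [Mul S₁] [Mul S₂] (T₁ : Set S₁) (T₂ : Set S₂)
    (φ : S₁ → S₂) : Prop :=
  Set.BijOn φ T₁ T₂ ∧ ∀ a ∈ T₁, ∀ b ∈ T₁, φ (a * b) = φ a * φ b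

/-- The partial wreath product `IS m ≀_p IS n`: pairs `(f, a)` with `a ∈ IS n` and
`f` a partial map from `Fin n` to `IS m` whose domain equals the domain of `a`. -/
structure PW (m n : ℕ) where
  base : IS n
  fib : Fin n → Option (IS m)
  dom_eq : ∀ x, (fib x).isSome ↔ (base x).isSome

/-- Multiplication of the partial wreath product: `(f,a)·(g,b) = (f g^a, ab)`. -/
instance {m n : ℕ} : Mul (PW m n) where
  mul u v :=
    { base := u.base * v.base
      fib := fun x => Option.map₂ (· * ·) (u.fib x) ((u.base x).bind v.fib)
      dom_eq := by
        intro x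
        show _ ↔ (((u.base x).bind v.base)).isSome
        cases h : u.base x with
        | none =>
          have : u.fib x = none := by
            have := (u.dom_eq x)
            simp [h] at this
            simpa using Option.not_isSome_iff_eq_none.mp (by simp [this])
          simp [h, this, Option.map₂]
        | some y =>
          have hf : (u.fib x).isSome := (u.dom_eq x).mpr (by simp [h])
          obtain ⟨s, hs⟩ := Option.isSome_iff_exists.mp hf
          cases h2 : v.base y with
          | none =>
            have : v.fib y = none := by
              have := (v.dom_eq y)
              simp [h2] at this
              simpa using Option.not_isSome_iff_eq_none.mp (by simp [this])
            simp [h, h2, hs, this, Option.map₂]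
          | some z =>
            have hg : (v.fib y).isSome := (v.dom_eq y).mpr (by simp [h2])
            obtain ⟨t, ht⟩ := Option.isSome_iff_exists.mp hg
            simp [h, h2, hs, ht, Option.map₂] }

/-- The identity of the partial wreath product. -/
instance {m n : ℕ} : One (PW m n) where
  one :=
    { base := 1
      fib := fun _ => some 1
      dom_eq := by intro x; simp; rfl }

/-- `chainFun L j x`: with `L` listing the elements of a block in increasing order and
`0 ≤ j < |L|` (`j` is the 0-based version of the paper's index), this is the value at `x` of
the chain `a_{i,j}`: the partial bijection with domain everything except `L[j]`,
sending `L[l] ↦ L[l+1]` for `l < j` and fixing all other points. -/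
def chainFun {n : ℕ} (L : List (Fin n)) (j : ℕ) (x : Fin n) : Option (Fin n) :=
  if x ∈ L then
    if L.idxOf x = j then none
    else if L.idxOf x < j then L[L.idxOf x + 1]?
    else some x
  else some x

/-- The generators `a_{i,j}` attached to an ordered decomposition with blocks `B i`. -/
def RGens {n s : ℕ} (B : Fin s → List (Fin n)) : Set (IS n) :=
  {a : IS n | ∃ i : Fin s, ∃ j : ℕ, j < (B i).length ∧ ∀ x, a x = chainFun (B i) j x}

/-- `R(M⃗₁, …, M⃗ₛ)`: the subsemigroup of `IS n` generated by the chains `a_{i,j}`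
together with the identity map. -/
def RSec {n s : ℕ} (B : Fin s → List (Fin n)) : Set (IS n) :=
  (Subsemigroup.closure (RGens B ∪ {1}) : Subsemigroup (IS n))

/-- A decomposition of `Fin n` into disjoint nonempty blocks, each block equipped with
a linear order, recorded by listing the elements of each block in increasing order. -/
structure OrderedPartition (n s : ℕ) where
  B : Fin s → List (Fin n)
  nonempty : ∀ i, B i ≠ []
  nodup : ∀ i, (B i).Nodup
  disjoint : ∀ i j, i ≠ j → ∀ x, x ∈ B i → x ∉ B j
  cover : ∀ x, ∃ i, x ∈ B i

/-- The chain `a_{i,j}` of the block listed by `L`, viewed inside `IS(M_i)`, i.e. embedded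
into `IS n` as a partial bijection whose domain is contained in the block: it is defined on
`L` minus `L[j]`, sends `L[l] ↦ L[l+1]` for `l < j` and fixes the other points of `L`. -/
def chainFunB {n : ℕ} (L : List (Fin n)) (j : ℕ) (x : Fin n) : Option (Fin n) :=
  if x ∈ L then
    if L.idxOf x = j then none
    else if L.idxOf x < j then L[L.idxOf x + 1]?
    else some x
  else none

/-- The generators of `R(M⃗)` inside `IS(M)` (embedded in `IS n`), `M` listed by `L`. -/
def BlockGens {n : ℕ} (L : List (Fin n)) : Set (IS n) :=
  {a : IS n | ∃ j : ℕ, j < L.length ∧ ∀ x, a x = chainFunB L j x}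

/-- The identity of `IS(M)` (embedded in `IS n`): the identity map of the block listed by `L`. -/
def idOn {n : ℕ} (L : List (Fin n)) : Set (IS n) :=
  {a : IS n | ∀ x, a x = if x ∈ L then some x else none}

/-- The R-cross-section `R(M⃗)` of `IS(M)`, embedded into `IS n`, for the block listed by `L`. -/
def RSecBlock {n : ℕ} (L : List (Fin n)) : Set (IS n) :=
  (Subsemigroup.closure (BlockGens L ∪ idOn L) : Subsemigroup (IS n))

/-- The wreath product `R_i ≀_p R(M⃗_i)` where `R(M⃗_i) ⊆ IS(M_i)`, `M_i` listed by `L`,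
and `R_i = T ⊆ IS m`, realized inside `PW m n` via the natural embedding
`IS m ≀_p IS(M_i) ⊆ IS m ≀_p IS n`. -/
def WBlock (m n : ℕ) (L : List (Fin n)) (T : Set (IS m)) : Set (PW m n) :=
  {u : PW m n | u.base ∈ RSecBlock L ∧ ∀ x f, u.fib x = some f → f ∈ T}

/-- The element `e' = (0̄, 1)` of `IS m ≀_p IS n`: the second component is the identity of
`IS n` and the first component sends every point to the empty map `0` of `IS m`. -/
def ezero (m n : ℕ) : PW m n where
  base := 1
  fib := fun _ => some ⊥
  dom_eq := by intro x; simp; rfl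

/-!
The element `e' = (0̄, 1)` is a central idempotent with `e' (f, a) = (0̄|_{dom a}, a)`, and a
central idempotent lies in every R-cross-section. So `e'R' ⊆ R'`, which gives the first two
parts, because `a ↦ (0̄|_{dom a}, a)` and `(f, a) ↦ a` are multiplicative and hence preserve `R`.

For the isomorphism the point is `φ e' = e'`. The R-class of `(f, a)` is determined by `dom a`
and the domains of the `f x`. For an idempotent `z` with base `b` and fibres `g`, the `u` in an
R-cross-section with `z u = u` are one per R-class below that of `z`, so there are
`∏_{x ∈ dom b} (2 ^ |dom (g x)| + 1)` of them. For `e'` this is `2 ^ n`, `φ` preserves the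
count, and the count forces `φ e'` into the R-class of `e'`; two R-related idempotents, one of
them central, are equal. Hence `φ` commutes with `e' · _`, and `φ₁` is `φ` read off on `e'R'`.
-/

section Green

variable {M N : Type*} [Monoid M] [Monoid N]

theorem greenR_iff {u v : M} : GreenR u v ↔ (∃ s, u = v * s) ∧ ∃ s, v = u * s := by
  refine ⟨fun h => ⟨?_, ?_⟩,
    fun ⟨⟨s, hs⟩, ⟨s', hs'⟩⟩ => Set.ext fun w => ⟨?_, ?_⟩⟩
  · exact (h ▸ ⟨1, (mul_one u).symm⟩ : u ∈ {w | ∃ s, w = v * s})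
  · exact (h.symm ▸ ⟨1, (mul_one v).symm⟩ : v ∈ {w | ∃ s, w = u * s})
  · rintro ⟨r, rfl⟩
    exact ⟨s * r, by rw [hs, mul_assoc]⟩
  · rintro ⟨r, rfl⟩
    exact ⟨s' * r, by rw [hs', mul_assoc]⟩

theorem GreenR.map (f : M →ₙ* N) {u v : M} (h : GreenR u v) : GreenR (f u) (f v) := by
  obtain ⟨⟨s, hs⟩, ⟨s', hs'⟩⟩ := greenR_iff.mp h
  exact greenR_iff.mpr ⟨⟨f s, by rw [hs, map_mul]⟩, ⟨f s', by rw [hs', map_mul]⟩⟩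

theorem IsIdempotentElem.mul_eq_self_iff_exists {e u : M} (he : IsIdempotentElem e) :
    e * u = u ↔ ∃ s, u = e * s :=
  ⟨fun h => ⟨u, h.symm⟩, fun ⟨s, hs⟩ => by rw [hs, ← mul_assoc, he.eq]⟩

theorem IsIdempotentElem.eq_of_greenR_of_mem_center {e f : M} (he : IsIdempotentElem e)
    (hc : e ∈ Set.center M) (hf : IsIdempotentElem f) (h : GreenR e f) : e = f := by
  obtain ⟨hfe, hef⟩ := greenR_iff.mp h
  calc e = f * e := ((IsIdempotentElem.mul_eq_self_iff_exists hf).mpr hfe).symm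
    _ = e * f := Semigroup.mem_center_iff.mp hc f
    _ = f := (IsIdempotentElem.mul_eq_self_iff_exists he).mpr hef

end Green

theorem IsRCrossSection.eq_of_greenR {S : Type*} [Mul S] {T : Set S} (hT : IsRCrossSection T)
    {u v : S} (hu : u ∈ T) (hv : v ∈ T) (h : GreenR u v) : u = v := by
  obtain ⟨t, -, ht⟩ := hT.2 u
  exact (ht u ⟨hu, rfl⟩).trans (ht v ⟨hv, h⟩).symm

/-- A central idempotent `e` and the representative `t` of its R-class satisfy `t * t * s = t`
whenever `e = t * s`, so `t` is idempotent and hence equal to `e`. -/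
theorem IsRCrossSection.mem_of_isIdempotentElem_of_mem_center {M : Type*} [Monoid M]
    {T : Set M} (hT : IsRCrossSection T) {e : M} (he : IsIdempotentElem e)
    (hc : e ∈ Set.center M) : e ∈ T := by
  obtain ⟨t, ⟨ht, het⟩, -⟩ := hT.2 e
  obtain ⟨⟨s, hs⟩, hte⟩ := greenR_iff.mp het
  have htt : IsIdempotentElem t := by
    refine hT.eq_of_greenR (hT.1 t ht t ht) ht (greenR_iff.mpr ⟨⟨t, rfl⟩, ⟨s, ?_⟩⟩)
    rw [mul_assoc, ← hs, Semigroup.mem_center_iff.mp hc t,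
      (IsIdempotentElem.mul_eq_self_iff_exists he).mpr hte]
  exact IsIdempotentElem.eq_of_greenR_of_mem_center he hc htt het ▸ ht

theorem IsSemiIso.ncard_fixedPoints_mul_left {S₁ S₂ : Type*} [Mul S₁] [Mul S₂] {T₁ : Set S₁}
    {T₂ : Set S₂} {φ : S₁ → S₂} (hφ : IsSemiIso T₁ T₂ φ) (hT₁ : ∀ a ∈ T₁, ∀ b ∈ T₁, a * b ∈ T₁)
    {e : S₁} (he : e ∈ T₁) :
    {v | v ∈ T₂ ∧ φ e * v = v}.ncard = {u | u ∈ T₁ ∧ e * u = u}.ncard := by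
  have himage : φ '' {u | u ∈ T₁ ∧ e * u = u} = {v | v ∈ T₂ ∧ φ e * v = v} := by
    ext v
    constructor
    · rintro ⟨u, ⟨hu, heu⟩, rfl⟩
      exact ⟨hφ.1.mapsTo hu, by rw [← hφ.2 e he u hu, heu]⟩
    · rintro ⟨hv, hev⟩
      obtain ⟨u, hu, rfl⟩ := hφ.1.surjOn hv
      refine ⟨u, ⟨hu, hφ.1.injOn (hT₁ e he u hu) hu ?_⟩, rfl⟩
      rw [hφ.2 e he u hu, hev]
  rw [← himage, (hφ.1.injOn.mono fun _ hu => hu.1).ncard_image]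

instance {k : ℕ} : Monoid (IS k) where
  mul_assoc := PEquiv.trans_assoc
  one_mul := PEquiv.refl_trans
  mul_one := PEquiv.trans_refl

section IS

variable {k : ℕ}

theorem IS.mul_apply (a b : IS k) (x : Fin k) : (a * b) x = (a x).bind b := rfl

theorem IS.one_apply (x : Fin k) : (1 : IS k) x = some x := rfl

@[simp]
theorem IS.bot_mul (a : IS k) : ⊥ * a = ⊥ := PEquiv.bot_trans a

@[simp]
theorem IS.mul_bot (a : IS k) : a * ⊥ = ⊥ := PEquiv.trans_bot a

def fdom (a : IS k) : Finset (Fin k) := Finset.univ.filter fun x => (a x).isSome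

@[simp]
theorem mem_fdom {a : IS k} {x : Fin k} : x ∈ fdom a ↔ (a x).isSome := by
  simp [fdom]

@[simp]
theorem fdom_bot : fdom (⊥ : IS k) = ∅ := by
  ext x
  simp

theorem fdom_ofSet (s : Finset (Fin k)) : fdom (PEquiv.ofSet (s : Set (Fin k))) = s := by
  ext x
  by_cases hx : x ∈ s <;> simp [PEquiv.ofSet, hx]

theorem fdom_mul_subset (a b : IS k) : fdom (a * b) ⊆ fdom a := by
  intro x hx
  rw [mem_fdom, IS.mul_apply] at hx
  cases h : a x <;> simp_all

theorem mul_symm_mul_of_fdom_subset {a b : IS k} (h : fdom b ⊆ fdom a) :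
    a * (a.symm * b) = b := by
  rw [← mul_assoc]
  ext x y
  show ((a.trans a.symm) x).bind b = some y ↔ b x = some y
  rw [PEquiv.self_trans_symm]
  by_cases hx : (a x).isSome
  · simp [PEquiv.ofSet, hx]
  · have hbx : b x = none := by simpa using mt (@h x) (by simpa using hx)
    simp [PEquiv.ofSet, hx, hbx]

end IS

namespace PW

variable {m n : ℕ}

@[ext]
theorem ext {u v : PW m n} (hb : u.base = v.base) (hf : ∀ x, u.fib x = v.fib x) : u = v := by
  cases u
  cases v
  cases hb
  congr
  exact funext hf

theorem mul_base (u v : PW m n) : (u * v).base = u.base * v.base := rfl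

theorem mul_fib (u v : PW m n) (x : Fin n) :
    (u * v).fib x = Option.map₂ (· * ·) (u.fib x) ((u.base x).bind v.fib) := rfl

theorem one_base : (1 : PW m n).base = 1 := rfl

theorem one_fib (x : Fin n) : (1 : PW m n).fib x = some 1 := rfl

theorem fib_eq_none_iff {u : PW m n} {x : Fin n} : u.fib x = none ↔ u.base x = none := by
  rw [← Option.not_isSome_iff_eq_none, ← Option.not_isSome_iff_eq_none, u.dom_eq x]

instance : Monoid (PW m n) where
  mul_assoc u v w := by
    refine PW.ext (mul_assoc u.base v.base w.base) fun x => ?_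
    simp only [mul_fib, mul_base, IS.mul_apply]
    cases h : u.base x with
    | none => simp [fib_eq_none_iff.mpr h]
    | some y => exact Option.map₂_assoc mul_assoc
  one_mul u := PW.ext (one_mul u.base) fun x => by
    simp [mul_fib, one_fib, one_base, IS.one_apply]
  mul_one u := PW.ext (mul_one u.base) fun x => by
    simp only [mul_fib]
    cases h : u.base x with
    | none => simp [fib_eq_none_iff.mpr h]
    | some y => simp [one_fib]

def zeroFib (a : IS n) : PW m n where
  base := a
  fib x := if (a x).isSome then some ⊥ else none
  dom_eq x := by split_ifs with h <;> simp [h]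

theorem eq_zeroFib_base_iff {w : PW m n} :
    w = zeroFib w.base ↔ ∀ x, w.fib x = if (w.base x).isSome then some (⊥ : IS m) else none :=
  ⟨fun h x => congrArg (PW.fib · x) h, fun h => PW.ext rfl h⟩

theorem ezero_mul (u : PW m n) : ezero m n * u = zeroFib u.base := by
  refine PW.ext (one_mul u.base) fun x => ?_
  show Option.map₂ (· * ·) (some ⊥) (u.fib x) = _
  have := u.dom_eq x
  cases hf : u.fib x <;> cases hb : u.base x <;> simp_all [zeroFib]

theorem mul_ezero (u : PW m n) : u * ezero m n = zeroFib u.base := by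
  refine PW.ext (mul_one u.base) fun x => ?_
  show Option.map₂ (· * ·) (u.fib x) ((u.base x).bind fun _ => some ⊥) = _
  have := u.dom_eq x
  cases hf : u.fib x <;> cases hb : u.base x <;> simp_all [zeroFib]

theorem ezero_isIdempotentElem : IsIdempotentElem (ezero m n) :=
  (ezero_mul _).trans (PW.ext rfl fun _ => rfl)

theorem ezero_mem_center : ezero m n ∈ Set.center (PW m n) :=
  Semigroup.mem_center_iff.mpr fun u => (mul_ezero u).trans (ezero_mul u).symm

theorem ezero_mem {T : Set (PW m n)} (hT : IsRCrossSection T) : ezero m n ∈ T :=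
  hT.mem_of_isIdempotentElem_of_mem_center ezero_isIdempotentElem ezero_mem_center

theorem zeroFib_mul_zeroFib (a b : IS n) :
    (zeroFib a : PW m n) * zeroFib b = zeroFib (a * b) :=
  calc zeroFib a * zeroFib b = ezero m n * zeroFib a * zeroFib b := by rw [ezero_mul]; rfl
    _ = zeroFib (a * b) := by rw [mul_assoc, ezero_mul]; rfl

def domProfile (u : PW m n) (x : Fin n) : WithBot (Finset (Fin m)) := (u.fib x).map fdom

theorem domProfile_ezero : (ezero m n).domProfile = fun _ => ↑(∅ : Finset (Fin m)) :=
  funext fun _ => congrArg some fdom_bot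

theorem domProfile_eq_bot_iff {u : PW m n} {x : Fin n} :
    u.domProfile x = ⊥ ↔ u.base x = none := by
  rw [← fib_eq_none_iff]
  exact Option.map_eq_none_iff

theorem domProfile_mul_le (u v : PW m n) : (u * v).domProfile ≤ u.domProfile := by
  intro x
  simp only [domProfile, mul_fib]
  cases u.fib x with
  | none => exact bot_le
  | some f =>
    cases (u.base x).bind v.fib with
    | none => exact bot_le
    | some g => exact WithBot.coe_le_coe.mpr (fdom_mul_subset f g)

def symm (v : PW m n) : PW m n where
  base := v.base.symm
  fib y := (v.base.symm y).bind fun x => (v.fib x).map PEquiv.symm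
  dom_eq y := by
    cases h : v.base.symm y with
    | none => simp
    | some x => simp [v.dom_eq x, v.base.eq_some_iff.mp h]

theorem base_eq_none_of_domProfile_le {u v : PW m n} (h : u.domProfile ≤ v.domProfile)
    {x : Fin n} (hx : v.base x = none) : u.base x = none := by
  have hle := h x
  rwa [domProfile_eq_bot_iff.mpr hx, le_bot_iff, domProfile_eq_bot_iff] at hle

theorem mul_symm_mul_of_domProfile_le {u v : PW m n} (h : u.domProfile ≤ v.domProfile) :
    v * (v.symm * u) = u := by
  have hbase : fdom u.base ⊆ fdom v.base := fun x hx => by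
    rw [mem_fdom, ← Option.ne_none_iff_isSome] at hx ⊢
    exact mt (base_eq_none_of_domProfile_le h) hx
  refine PW.ext (mul_symm_mul_of_fdom_subset hbase) fun x => ?_
  simp only [mul_fib]
  cases hvx : v.base x with
  | none =>
    simp [fib_eq_none_iff.mpr hvx, fib_eq_none_iff.mpr (base_eq_none_of_domProfile_le h hvx)]
  | some y =>
    obtain ⟨f, hf⟩ := Option.isSome_iff_exists.mp ((v.dom_eq x).mpr (by simp [hvx]))
    have hsymm : v.base.symm y = some x := v.base.eq_some_iff.mpr hvx
    have hle := h x
    simp only [domProfile, hf] at hle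
    cases hux : u.fib x with
    | none => simp [symm, hsymm, hf, hux]
    | some g =>
      rw [hux] at hle
      simp [symm, hsymm, hf, hux, mul_symm_mul_of_fdom_subset (WithBot.coe_le_coe.mp hle)]

theorem exists_eq_mul_iff_domProfile_le {u v : PW m n} :
    (∃ s, u = v * s) ↔ u.domProfile ≤ v.domProfile :=
  ⟨fun ⟨s, hs⟩ => hs ▸ domProfile_mul_le v s,
    fun h => ⟨v.symm * u, (mul_symm_mul_of_domProfile_le h).symm⟩⟩

theorem greenR_iff_domProfile_eq {u v : PW m n} : GreenR u v ↔ u.domProfile = v.domProfile := by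
  rw [greenR_iff, exists_eq_mul_iff_domProfile_le, exists_eq_mul_iff_domProfile_le]
  exact ⟨fun h => le_antisymm h.1 h.2, fun h => ⟨h.le, h.ge⟩⟩

theorem domProfile_surjective : Function.Surjective (domProfile : PW m n → _) := fun d =>
  ⟨{ base := PEquiv.ofSet {x | d x ≠ ⊥}
     fib x := Option.map (fun s : Finset (Fin m) => PEquiv.ofSet (s : Set (Fin m))) (d x)
     dom_eq x := by cases h : d x <;> simp [PEquiv.ofSet, h] <;> rfl },
   funext fun x => by
    change Option.map fdom (Option.map _ (d x)) = d x
    cases d x with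
    | bot => rfl
    | coe s => exact congrArg some (fdom_ofSet s)⟩

end PW

theorem eq_zero_of_two_pow_add_one_dvd_two_pow {k N : ℕ} (h : 2 ^ k + 1 ∣ 2 ^ N) : k = 0 := by
  obtain ⟨j, -, hj⟩ := (Nat.dvd_prime_pow Nat.prime_two).mp h
  cases k with
  | zero => rfl
  | succ k =>
    cases j with
    | zero => simp at hj
    | succ j =>
      rw [pow_succ, pow_succ] at hj
      omega

section IicCard

variable {α ι : Type*} [DecidableEq α] [Fintype ι]

theorem card_Iic_withBot_coe (s : Finset α) :
    (Finset.Iic (s : WithBot (Finset α))).card = 2 ^ s.card + 1 := by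
  rw [← Finset.Icc_bot, WithBot.Icc_bot_coe, ← Finset.card_Iic_finset]
  exact Finset.card_insertNone _

theorem eq_bot_or_eq_coe_empty_of_card_Iic_dvd {o : WithBot (Finset α)} {N : ℕ}
    (h : (Finset.Iic o).card ∣ 2 ^ N) : o = ⊥ ∨ o = ↑(∅ : Finset α) := by
  cases o with
  | bot => exact Or.inl rfl
  | coe s =>
    rw [card_Iic_withBot_coe] at h
    exact Or.inr (congrArg _ (Finset.card_eq_zero.mp (eq_zero_of_two_pow_add_one_dvd_two_pow h)))

/-- Each factor is `1` (at `⊥`), `2` (at `∅`) or an odd number `2 ^ k + 1 ≥ 3`, so a product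
of `|ι|` of them equal to `2 ^ |ι|` has every factor equal to `2`. -/
theorem eq_coe_empty_of_prod_card_Iic {d : ι → WithBot (Finset α)}
    (h : ∏ i, (Finset.Iic (d i)).card = 2 ^ Fintype.card ι) (i : ι) :
    d i = ↑(∅ : Finset α) := by
  have hcases (j : ι) : d j = ⊥ ∨ d j = ↑(∅ : Finset α) :=
    eq_bot_or_eq_coe_empty_of_card_Iic_dvd (h ▸ Finset.dvd_prod_of_mem _ (Finset.mem_univ j))
  refine (hcases i).resolve_left fun hi => ?_
  have hlt : ∏ j, (Finset.Iic (d j)).card < ∏ _j : ι, 2 := by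
    refine Finset.prod_lt_prod (fun j _ => Finset.card_pos.mpr ⟨⊥, by simp⟩)
      (fun j _ => ?_) ⟨i, Finset.mem_univ i, by simp [hi]⟩
    rcases hcases j with hj | hj <;> simp [hj, card_Iic_withBot_coe]
  simp [h] at hlt

end IicCard

section CrossSection

variable {m n : ℕ}

open PW

theorem IsRCrossSection.ncard_fixedPoints_mul_left {T : Set (PW m n)} (hT : IsRCrossSection T)
    {z : PW m n} (hz : IsIdempotentElem z) :
    {u | u ∈ T ∧ z * u = u}.ncard = ∏ x, (Finset.Iic (z.domProfile x)).card := by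
  have hinj : Set.InjOn domProfile {u | u ∈ T ∧ z * u = u} := fun u hu v hv h =>
    hT.eq_of_greenR hu.1 hv.1 (greenR_iff_domProfile_eq.mpr h)
  have himage : domProfile '' {u | u ∈ T ∧ z * u = u} = ↑(Finset.Iic z.domProfile) := by
    ext d
    rw [Finset.coe_Iic, Set.mem_Iic]
    constructor
    · rintro ⟨u, ⟨-, hzu⟩, rfl⟩
      exact exists_eq_mul_iff_domProfile_le.mp
        ((IsIdempotentElem.mul_eq_self_iff_exists hz).mp hzu)
    · intro hd
      obtain ⟨w, rfl⟩ := domProfile_surjective d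
      obtain ⟨t, ⟨ht, hwt⟩, -⟩ := hT.2 w
      rw [greenR_iff_domProfile_eq] at hwt
      rw [hwt, ← exists_eq_mul_iff_domProfile_le] at hd
      exact ⟨t, ⟨ht, (IsIdempotentElem.mul_eq_self_iff_exists hz).mpr hd⟩, hwt.symm⟩
  rw [← hinj.ncard_image, himage, Set.ncard_coe_finset, Pi.card_Iic]

theorem IsRCrossSection.image_base {T : Set (PW m n)} (hT : IsRCrossSection T) :
    IsRCrossSection (PW.base '' T) := by
  refine ⟨fun _ ⟨u, hu, hua⟩ _ ⟨v, hv, hvb⟩ => ⟨u * v, hT.1 u hu v hv, hua ▸ hvb ▸ rfl⟩,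
    fun a => ?_⟩
  obtain ⟨t, ⟨ht, hat⟩, -⟩ := hT.2 (zeroFib a)
  refine ⟨t.base, ⟨⟨t, ht, rfl⟩, hat.map ⟨PW.base, fun _ _ => rfl⟩⟩, ?_⟩
  rintro _ ⟨⟨v, hv, rfl⟩, hav⟩
  have hzv : zeroFib v.base ∈ T := ezero_mul v ▸ hT.1 _ (ezero_mem hT) _ hv
  have hvt : GreenR (zeroFib v.base : PW m n) t :=
    (hav.map ⟨zeroFib, fun a b => (zeroFib_mul_zeroFib a b).symm⟩ : _).symm.trans hat
  exact (congrArg PW.base (hT.eq_of_greenR hzv ht hvt) :)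

theorem zeroFib_mem {T : Set (PW m n)} (hT : IsRCrossSection T) {a : IS n}
    (ha : a ∈ PW.base '' T) : zeroFib a ∈ T := by
  obtain ⟨u, hu, rfl⟩ := ha
  exact ezero_mul u ▸ hT.1 _ (ezero_mem hT) _ hu

end CrossSection

namespace IsSemiIso

variable {m n : ℕ} {R' R'' : Set (PW m n)} {φ : PW m n → PW m n}

open PW

theorem map_ezero (hR' : IsRCrossSection R') (hR'' : IsRCrossSection R'')
    (hφ : IsSemiIso R' R'' φ) : φ (ezero m n) = ezero m n := by
  have he := ezero_mem hR'
  have hz : IsIdempotentElem (φ (ezero m n)) := by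
    rw [IsIdempotentElem, ← hφ.2 _ he _ he, ezero_isIdempotentElem.eq]
  have hcount :
      ∏ x, (Finset.Iic ((φ (ezero m n)).domProfile x)).card = 2 ^ Fintype.card (Fin n) := by
    rw [← hR''.ncard_fixedPoints_mul_left hz, hφ.ncard_fixedPoints_mul_left hR'.1 he,
      hR'.ncard_fixedPoints_mul_left ezero_isIdempotentElem]
    simp [domProfile_ezero, card_Iic_withBot_coe]
  have hprofile : (φ (ezero m n)).domProfile = (ezero m n).domProfile := by
    rw [domProfile_ezero]
    exact funext (eq_coe_empty_of_prod_card_Iic hcount)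
  exact (IsIdempotentElem.eq_of_greenR_of_mem_center ezero_isIdempotentElem ezero_mem_center hz
    (greenR_iff_domProfile_eq.mpr hprofile.symm)).symm

theorem map_ezero_mul (hR' : IsRCrossSection R') (hR'' : IsRCrossSection R'')
    (hφ : IsSemiIso R' R'' φ) {u : PW m n} (hu : u ∈ R') :
    φ (ezero m n * u) = ezero m n * φ u := by
  rw [hφ.2 _ (ezero_mem hR') _ hu, hφ.map_ezero hR' hR'']

theorem map_zeroFib (hR' : IsRCrossSection R') (hR'' : IsRCrossSection R'')
    (hφ : IsSemiIso R' R'' φ) {a : IS n} (ha : a ∈ PW.base '' R') :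
    φ (zeroFib a) = zeroFib (φ (zeroFib a)).base := by
  obtain ⟨u, hu, rfl⟩ := ha
  rw [← ezero_mul u, hφ.map_ezero_mul hR' hR'' hu, ← ezero_mul, ← mul_assoc,
    ezero_isIdempotentElem.eq]

theorem base_zeroFib (hR' : IsRCrossSection R') (hR'' : IsRCrossSection R'')
    (hφ : IsSemiIso R' R'' φ) :
    IsSemiIso (PW.base '' R') (PW.base '' R'') fun a => (φ (zeroFib a)).base := by
  refine ⟨⟨fun a ha => ⟨_, hφ.1.mapsTo (zeroFib_mem hR' ha), rfl⟩, fun a ha b hb hab => ?_,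
    fun b hb => ?_⟩, fun a _ b _ => ?_⟩
  · have := hφ.1.injOn (zeroFib_mem hR' ha) (zeroFib_mem hR' hb)
      (by rw [hφ.map_zeroFib hR' hR'' ha, hφ.map_zeroFib hR' hR'' hb]
          exact congrArg zeroFib hab)
    exact congrArg PW.base this
  · obtain ⟨u, hu, hub⟩ := hφ.1.surjOn (zeroFib_mem hR'' hb)
    have hfix : ezero m n * u = u := hφ.1.injOn (hR'.1 _ (ezero_mem hR') _ hu) hu
      (by rw [hφ.map_ezero_mul hR' hR'' hu, hub, ezero_mul]; rfl)
    refine ⟨u.base, ⟨u, hu, rfl⟩, ?_⟩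
    show (φ (zeroFib u.base)).base = b
    rw [← ezero_mul, hfix, hub]
    rfl
  · show (φ (zeroFib (a * b))).base = (φ (zeroFib a)).base * (φ (zeroFib b)).base
    rw [← zeroFib_mul_zeroFib, hφ.2 _ (zeroFib_mem hR' ‹_›) _ (zeroFib_mem hR' ‹_›)]
    rfl

end IsSemiIso

/-- for an R-cross-section `R'` of `IS m ≀_p IS n`, the set
`R'_1 = {a : (f,a) ∈ R'}` is an R-cross-section of `IS n`; moreover
`e' R' = {(0̄|_{dom a}, a) : a ∈ R'_1}`, and any isomorphism `φ : R' → R''` induces an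
isomorphism `φ₁ : R'_1 → R''_1` determined by `(0̄|_{dom φ₁(a)}, φ₁(a)) = φ((0̄|_{dom a}, a))`. -/
theorem base_projection_rcross (m n : ℕ) (R' : Set (PW m n)) (hR' : IsRCrossSection R') :
    IsRCrossSection {a : IS n | ∃ u ∈ R', u.base = a} ∧
    ({w : PW m n | ∃ u ∈ R', w = ezero m n * u} =
      {w : PW m n | (∃ u ∈ R', u.base = w.base) ∧
        ∀ x, w.fib x = if (w.base x).isSome then some (⊥ : IS m) else none}) ∧
    (∀ (R'' : Set (PW m n)) (φ : PW m n → PW m n),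
      IsRCrossSection R'' → IsSemiIso R' R'' φ →
      ∃ φ₁ : IS n → IS n,
        IsSemiIso {a : IS n | ∃ u ∈ R', u.base = a} {a : IS n | ∃ u ∈ R'', u.base = a} φ₁ ∧
        ∀ u ∈ R', (∀ x, u.fib x = if (u.base x).isSome then some (⊥ : IS m) else none) →
          (φ u).base = φ₁ u.base ∧
          ∀ x, (φ u).fib x = if ((φ u).base x).isSome then some (⊥ : IS m) else none) := by
  refine ⟨hR'.image_base, Set.ext fun w => ?_, fun R'' φ hR'' hφ =>
    ⟨_, hφ.base_zeroFib hR' hR'', fun u hu hfib => ?_⟩⟩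
  · simp only [← PW.eq_zeroFib_base_iff]
    constructor
    · rintro ⟨u, hu, rfl⟩
      rw [PW.ezero_mul]
      exact ⟨⟨u, hu, rfl⟩, rfl⟩
    · rintro ⟨⟨u, hu, hbase⟩, hw⟩
      exact ⟨u, hu, by rw [PW.ezero_mul, hbase, ← hw]⟩
  · have h := hφ.map_zeroFib hR' hR'' ⟨u, hu, rfl⟩
    rw [← PW.eq_zeroFib_base_iff] at hfib ⊢
    rw [← hfib] at h
    exact ⟨congrArg (fun v => (φ v).base) hfib, h⟩
end ISW
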